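/- arXiv:2204.01877 — 3 statements merged into one kernel-verified Lean document; each statement's English description precedes it below -/
import Mathlib

section
/- Let η ∈ ℝⁿ be a positive vector and let F : ℝⁿ → ℝⁿ be continuously differentiable with μ_{∞,η⁻¹}(−DF(x)) ≤ −c for all x ∈ ℝⁿ, where c > 0. Then ‖F(x) − F(y)‖_{∞,η⁻¹} ≥ c ‖x − y‖_{∞,η⁻¹} for all x, y ∈ ℝⁿ; in particular F is injective, and any map G satisfying G(F(x)) = x for all x is Lipschitz on the range of F with constant 1/c with respect to ‖·‖_{∞,η⁻¹}. -/
open Filter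

/-- Diagonally weighted ℓ∞ norm: ‖x‖_{∞,η⁻¹} = max_i |x_i|/η_i. -/
noncomputable def wNorm {n : ℕ} (η x : Fin n → ℝ) : ℝ := ⨆ i, |x i| / η i

/-- Diagonally weighted ℓ∞ logarithmic norm of a matrix. -/
noncomputable def logNorm {n : ℕ} (η : Fin n → ℝ) (A : Matrix (Fin n) (Fin n) ℝ) : ℝ :=
  ⨆ i, (A i i + ∑ j ∈ Finset.univ.erase i, (η j / η i) * |A i j|)

/-- Jacobian matrix of `F` at `x`: (DF(x))_{ij} = ∂F_i/∂x_j. -/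
noncomputable def jac {n : ℕ} (F : (Fin n → ℝ) → (Fin n → ℝ)) (x : Fin n → ℝ) :
    Matrix (Fin n) (Fin n) ℝ :=
  fun i j => fderiv ℝ F x (Pi.single j 1) i

/-!
Let `d = x - y` and pick a coordinate `i` at which `|d j| / η j` is maximal; by symmetry `d i ≥ 0`.
The hypothesis on the logarithmic norm says that every row of `DF(w)` is weighted diagonally
dominant with margin `c`, so `(DF(w) d)_i ≥ c d_i` for every `w`, because `|d j| ≤ (η j / η i) d i`.
Applying the mean value theorem to `t ↦ F(y + t d)_i` gives `(F x - F y)_i ≥ c d_i`,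
i.e. `‖F x - F y‖ ≥ c ‖x - y‖`; injectivity and the Lipschitz bound for a left inverse follow.
-/

open Matrix

theorem mul_le_sub_of_le_fderiv {E : Type*} [NormedAddCommGroup E] [NormedSpace ℝ E]
    {f : E → ℝ} (hf : Differentiable ℝ f) {x y : E} {C : ℝ}
    (hC : ∀ t : ℝ, C ≤ fderiv ℝ f (y + t • (x - y)) (x - y)) : C ≤ f x - f y := by
  set g : ℝ → ℝ := fun t => f (y + t • (x - y))
  have hg : ∀ t, HasDerivAt g (fderiv ℝ f (y + t • (x - y)) (x - y)) t := fun t => by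
    have hline : HasDerivAt (fun t : ℝ => y + t • (x - y)) (x - y) t := by
      simpa using ((hasDerivAt_id t).smul_const (x - y)).const_add y
    exact (hf _).hasFDerivAt.comp_hasDerivAt t hline
  have := mul_sub_le_image_sub_of_le_deriv (f := g) (fun t => (hg t).differentiableAt)
    (fun t => (hg t).deriv ▸ hC t) zero_le_one
  simpa [g] using this

section wNorm

variable {n : ℕ} {η : Fin n → ℝ}

theorem abs_div_le_wNorm (x : Fin n → ℝ) (i : Fin n) : |x i| / η i ≤ wNorm η x :=
  le_ciSup (f := fun j => |x j| / η j) (Set.finite_range _).bddAbove i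

theorem exists_wNorm_eq [Nonempty (Fin n)] (x : Fin n → ℝ) :
    ∃ i, wNorm η x = |x i| / η i ∧ ∀ j, |x j| / η j ≤ |x i| / η i := by
  obtain ⟨i, hi⟩ := Finite.exists_max fun j => |x j| / η j
  exact ⟨i, le_antisymm (ciSup_le hi) (abs_div_le_wNorm x i), hi⟩

theorem eq_zero_of_wNorm_nonpos (hη : ∀ i, 0 < η i) {x : Fin n → ℝ} (hx : wNorm η x ≤ 0) :
    x = 0 := by
  funext i
  have : |x i| / η i ≤ 0 := (abs_div_le_wNorm x i).trans hx
  rw [div_le_iff₀ (hη i), zero_mul] at this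
  exact abs_nonpos_iff.mp this

theorem wNorm_zero : wNorm η 0 = 0 := by simp [wNorm]

end wNorm

theorem le_diag_sub_of_logNorm_neg_le {n : ℕ} {η : Fin n → ℝ} {A : Matrix (Fin n) (Fin n) ℝ}
    {c : ℝ} (hA : logNorm η (-A) ≤ -c) (i : Fin n) :
    c ≤ A i i - ∑ j ∈ Finset.univ.erase i, (η j / η i) * |A i j| := by
  have := (le_ciSup (f := fun i => (-A) i i + ∑ j ∈ Finset.univ.erase i, (η j / η i) * |(-A) i j|)
    (Set.finite_range _).bddAbove i).trans hA
  simp only [Matrix.neg_apply, abs_neg] at this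
  linarith

theorem mul_le_mulVec_apply_of_dominant {n : ℕ} {η : Fin n → ℝ} (hη : ∀ i, 0 < η i)
    {A : Matrix (Fin n) (Fin n) ℝ} {c : ℝ} {i : Fin n}
    (hA : c ≤ A i i - ∑ j ∈ Finset.univ.erase i, (η j / η i) * |A i j|)
    {d : Fin n → ℝ} (hdi : 0 ≤ d i) (hd : ∀ j, |d j| / η j ≤ d i / η i) :
    c * d i ≤ (A *ᵥ d) i := by
  have hoff : ∀ j ∈ Finset.univ.erase i, -((η j / η i) * |A i j| * d i) ≤ A i j * d j := by
    intro j _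
    have hdj : |d j| ≤ η j / η i * d i := by
      have := hd j
      rw [div_le_div_iff₀ (hη j) (hη i)] at this
      rw [div_mul_eq_mul_div, le_div_iff₀ (hη i)]
      linarith
    calc -((η j / η i) * |A i j| * d i) = -(|A i j| * (η j / η i * d i)) := by ring
      _ ≤ -(|A i j| * |d j|) := by gcongr
      _ ≤ A i j * d j := by rw [← abs_mul]; exact neg_abs_le _
  have := Finset.sum_le_sum hoff
  rw [Finset.sum_neg_distrib, ← Finset.sum_mul] at this
  rw [mulVec, dotProduct, ← Finset.add_sum_erase _ _ (Finset.mem_univ i)]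
  nlinarith

theorem jac_mulVec {n : ℕ} (F : (Fin n → ℝ) → (Fin n → ℝ)) (x v : Fin n → ℝ) :
    jac F x *ᵥ v = fderiv ℝ F x v :=
  LinearMap.toMatrix'_mulVec (fderiv ℝ F x).toLinearMap v

section StronglyMonotone

variable {n : ℕ} {η : Fin n → ℝ} {F : (Fin n → ℝ) → (Fin n → ℝ)} {c : ℝ}

theorem mul_le_apply_sub_of_logNorm_le (hη : ∀ i, 0 < η i) (hF : Differentiable ℝ F)
    (hmono : ∀ x, logNorm η (-(jac F x)) ≤ -c) {x y : Fin n → ℝ} {i : Fin n}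
    (hdi : 0 ≤ (x - y) i) (hd : ∀ j, |(x - y) j| / η j ≤ (x - y) i / η i) :
    c * (x - y) i ≤ (F x - F y) i :=
  mul_le_sub_of_le_fderiv (f := fun z => F z i) (differentiable_pi.1 hF i) fun t => by
    have hrow := le_diag_sub_of_logNorm_neg_le (hmono (y + t • (x - y))) i
    rw [fderiv_apply (hF _), ContinuousLinearMap.comp_apply, ContinuousLinearMap.proj_apply,
      ← jac_mulVec]
    exact mul_le_mulVec_apply_of_dominant hη hrow hdi hd

theorem mul_abs_le_abs_apply_sub (hη : ∀ i, 0 < η i) (hF : Differentiable ℝ F)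
    (hmono : ∀ x, logNorm η (-(jac F x)) ≤ -c) {x y : Fin n → ℝ} {i : Fin n}
    (hi : ∀ j, |(x - y) j| / η j ≤ |(x - y) i| / η i) :
    c * |(x - y) i| ≤ |(F x - F y) i| := by
  wlog hdi : 0 ≤ (x - y) i generalizing x y
  · have hyx : ∀ j, |(y - x) j| = |(x - y) j| := fun j => by simp [abs_sub_comm]
    have hdi' : 0 ≤ (y - x) i := by simp only [Pi.sub_apply, not_le] at hdi ⊢; linarith
    have := this (x := y) (y := x) (by simpa only [hyx] using hi) hdi'
    rwa [hyx, ← neg_sub (F x), Pi.neg_apply, abs_neg] at this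
  rw [abs_of_nonneg hdi] at hi ⊢
  exact (mul_le_apply_sub_of_logNorm_le hη hF hmono hdi hi).trans (le_abs_self _)

theorem mul_wNorm_sub_le (hη : ∀ i, 0 < η i) (hF : Differentiable ℝ F)
    (hmono : ∀ x, logNorm η (-(jac F x)) ≤ -c) (x y : Fin n → ℝ) :
    c * wNorm η (x - y) ≤ wNorm η (F x - F y) := by
  rcases isEmpty_or_nonempty (Fin n) with _ | _
  · simp [wNorm]
  obtain ⟨i, hw, hi⟩ := exists_wNorm_eq (η := η) (x - y)
  calc c * wNorm η (x - y) = c * |(x - y) i| / η i := by rw [hw, mul_div_assoc]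
    _ ≤ |(F x - F y) i| / η i :=
      div_le_div_of_nonneg_right (mul_abs_le_abs_apply_sub hη hF hmono hi) (hη i).le
    _ ≤ wNorm η (F x - F y) := abs_div_le_wNorm _ i

end StronglyMonotone

/-- Strongly monotone maps are expansive; inverses are Lipschitz with constant 1/c. -/
theorem stmt_1 {n : ℕ} (η : Fin n → ℝ) (hη : ∀ i, 0 < η i)
    (F : (Fin n → ℝ) → (Fin n → ℝ)) (hF : ContDiff ℝ 1 F)
    (c : ℝ) (hc : 0 < c) (hmono : ∀ x, logNorm η (-(jac F x)) ≤ -c) :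
    (∀ x y : Fin n → ℝ, wNorm η (F x - F y) ≥ c * wNorm η (x - y)) ∧
    Function.Injective F ∧
    (∀ G : (Fin n → ℝ) → (Fin n → ℝ), (∀ x, G (F x) = x) →
      ∀ u ∈ Set.range F, ∀ v ∈ Set.range F,
        wNorm η (G u - G v) ≤ (1 / c) * wNorm η (u - v)) := by
  have hexp := mul_wNorm_sub_le hη (hF.differentiable one_ne_zero) hmono
  refine ⟨hexp, fun x y hxy => ?_, ?_⟩
  · have := hexp x y
    rw [hxy, sub_self, wNorm_zero] at this
    exact sub_eq_zero.mp (eq_zero_of_wNorm_nonpos hη (nonpos_of_mul_nonpos_right this hc))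
  · rintro G hG _ ⟨x, rfl⟩ _ ⟨y, rfl⟩
    rw [hG, hG, one_div_mul_eq_div, le_div_iff₀' hc]
    exact hexp x y
end

section
/- Let η ∈ ℝⁿ be a positive vector and let F : ℝⁿ → ℝⁿ be continuously differentiable with μ_{∞,η⁻¹}(−DF(x)) ≤ −c for all x ∈ ℝⁿ, where c ≥ 0. Let d > 0 be a diagonal bound for F, i.e., (DF(x))_{ii} ≤ d for all x and all i. Then for every α ∈ (0, 1/d], the map x ↦ x − αF(x) is Lipschitz with constant 1 − αc with respect to ‖·‖_{∞,η⁻¹}. -/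
open Filter

/-!
The conclusion is a Lipschitz bound for a map whose derivative at `z` is `I - α DF(z)`, so by
the mean value inequality (applied coordinatewise) it suffices to show that each matrix
`I - α A` with `μ_{∞,η⁻¹}(-A) ≤ -c` and `α A_ii ≤ 1` has weighted operator norm at most
`1 - α c`. The condition `α A_ii ≤ 1` makes the diagonal entry `1 - α A_ii` of row `i`
nonnegative, so the weighted absolute row sum of `I - α A` is exactly
`1 - α (A_ii - ∑_{j ≠ i} (η_j/η_i) |A_ij|) ≤ 1 - α c`.
-/

open Finset Matrix

section WeightedNorm

variable {n : ℕ} {η : Fin n → ℝ}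

lemma abs_le_wNorm_mul (hη : ∀ i, 0 < η i) (x : Fin n → ℝ) (i : Fin n) :
    |x i| ≤ wNorm η x * η i :=
  (div_le_iff₀ (hη i)).1 (le_ciSup (f := fun i => |x i| / η i) (Set.finite_range _).bddAbove i)

lemma wNorm_le [Nonempty (Fin n)] (hη : ∀ i, 0 < η i) {x : Fin n → ℝ} {C : ℝ}
    (h : ∀ i, |x i| ≤ C * η i) : wNorm η x ≤ C :=
  ciSup_le fun i => (div_le_iff₀ (hη i)).2 (h i)

lemma row_le_logNorm (A : Matrix (Fin n) (Fin n) ℝ) (i : Fin n) :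
    A i i + ∑ j ∈ univ.erase i, (η j / η i) * |A i j| ≤ logNorm η A :=
  le_ciSup (f := fun i => A i i + ∑ j ∈ univ.erase i, (η j / η i) * |A i j|)
    (Set.finite_range _).bddAbove i

lemma abs_sub_smul_mulVec_apply_le (hη : ∀ i, 0 < η i) {A : Matrix (Fin n) (Fin n) ℝ}
    {c α : ℝ} (hA : logNorm η (-A) ≤ -c) (hα : 0 ≤ α) (u : Fin n → ℝ) (i : Fin n)
    (hAii : α * A i i ≤ 1) :
    |(u - α • A *ᵥ u) i| ≤ (1 - α * c) * (wNorm η u * η i) := by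
  set N := wNorm η u
  set S := ∑ j ∈ univ.erase i, (η j / η i) * |A i j|
  have hrow : -A i i + S ≤ -c := by
    have h := (row_le_logNorm (η := η) (-A) i).trans hA
    simp only [Matrix.neg_apply, abs_neg] at h
    exact h
  have hdiag : 0 ≤ 1 - α * A i i := sub_nonneg.2 hAii
  have hsplit : (u - α • A *ᵥ u) i
      = (1 - α * A i i) * u i - α * ∑ j ∈ univ.erase i, A i j * u j := by
    simp only [Pi.sub_apply, Pi.smul_apply, smul_eq_mul, mulVec, dotProduct,
      ← add_sum_erase _ _ (mem_univ i)]
    ring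
  have hoff : ∑ j ∈ univ.erase i, |A i j| * (N * η j) = N * η i * S := by
    rw [mul_sum]
    refine sum_congr rfl fun j _ => ?_
    field_simp [(hη i).ne']
  calc |(u - α • A *ᵥ u) i|
      ≤ (1 - α * A i i) * |u i| + α * ∑ j ∈ univ.erase i, |A i j| * |u j| := by
        rw [hsplit]
        refine (abs_sub _ _).trans (add_le_add ?_ ?_)
        · rw [abs_mul, abs_of_nonneg hdiag]
        · rw [abs_mul, abs_of_nonneg hα]
          gcongr
          exact (abs_sum_le_sum_abs _ _).trans_eq (by simp only [abs_mul])
    _ ≤ (1 - α * A i i) * (N * η i) + α * ∑ j ∈ univ.erase i, |A i j| * (N * η j) := by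
        gcongr <;> exact abs_le_wNorm_mul hη u _
    _ = (1 - α * (A i i - S)) * (N * η i) := by rw [hoff]; ring
    _ ≤ (1 - α * c) * (N * η i) := by
        have hNη : 0 ≤ N * η i := (abs_nonneg _).trans (abs_le_wNorm_mul hη u i)
        gcongr
        linarith

lemma wNorm_sub_smul_mulVec_le [Nonempty (Fin n)] (hη : ∀ i, 0 < η i)
    {A : Matrix (Fin n) (Fin n) ℝ} {c α : ℝ} (hA : logNorm η (-A) ≤ -c) (hα : 0 ≤ α)
    (hAii : ∀ i, α * A i i ≤ 1) (u : Fin n → ℝ) :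
    wNorm η (u - α • A *ᵥ u) ≤ (1 - α * c) * wNorm η u :=
  wNorm_le hη fun i =>
    (abs_sub_smul_mulVec_apply_le hη hA hα u i (hAii i)).trans_eq (mul_assoc _ _ _).symm

lemma wNorm_sub_le_of_wNorm_fderiv_le [Nonempty (Fin n)] (hη : ∀ i, 0 < η i)
    {G : (Fin n → ℝ) → Fin n → ℝ} (hG : Differentiable ℝ G) {L : ℝ}
    (hG' : ∀ z u, wNorm η (fderiv ℝ G z u) ≤ L * wNorm η u) (x y : Fin n → ℝ) :
    wNorm η (G x - G y) ≤ L * wNorm η (x - y) := by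
  refine wNorm_le hη fun i => ?_
  have hline : ∀ t : ℝ, HasDerivAt (fun t : ℝ => G (y + t • (x - y)) i)
      (fderiv ℝ G (y + t • (x - y)) (x - y) i) t := by
    intro t
    have hseg : HasDerivAt (fun t : ℝ => y + t • (x - y)) (x - y) t := by
      simpa using ((hasDerivAt_id t).smul_const (x - y)).const_add y
    exact hasDerivAt_pi.1 ((hG _).hasFDerivAt.comp_hasDerivAt t hseg) i
  have hbound : ∀ t : ℝ,
      |fderiv ℝ G (y + t • (x - y)) (x - y) i| ≤ L * wNorm η (x - y) * η i :=
    fun t => (abs_le_wNorm_mul hη _ i).trans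
      (mul_le_mul_of_nonneg_right (hG' _ _) (hη i).le)
  simpa using norm_image_sub_le_of_norm_deriv_le_segment_01'
    (fun t _ => (hline t).hasDerivWithinAt) (fun t _ => hbound t)

end WeightedNorm

lemma fderiv_apply_eq_jac_mulVec {n : ℕ} (F : (Fin n → ℝ) → Fin n → ℝ) (x u : Fin n → ℝ) :
    fderiv ℝ F x u = jac F x *ᵥ u := by
  have hjac : jac F x = LinearMap.toMatrix' (fderiv ℝ F x : (Fin n → ℝ) →ₗ[ℝ] Fin n → ℝ) := by
    ext i j
    rfl
  rw [hjac, LinearMap.toMatrix'_mulVec]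
  rfl

theorem stmt_2_general {n : ℕ} (η : Fin n → ℝ) (hη : ∀ i, 0 < η i)
    (F : (Fin n → ℝ) → (Fin n → ℝ)) (hF : ContDiff ℝ 1 F)
    (c : ℝ) (hmono : ∀ x, logNorm η (-(jac F x)) ≤ -c)
    (d : ℝ) (hd : 0 < d) (hdiag : ∀ x i, jac F x i i ≤ d)
    (α : ℝ) (hα : α ∈ Set.Ioc (0 : ℝ) (1 / d)) :
    ∀ x y : Fin n → ℝ,
      wNorm η ((x - α • F x) - (y - α • F y)) ≤ (1 - α * c) * wNorm η (x - y) := by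
  intro x y
  rcases isEmpty_or_nonempty (Fin n) with _ | _
  · simp [wNorm]
  obtain ⟨hα0, hαd⟩ := hα
  have hαdiag : ∀ z i, α * jac F z i i ≤ 1 := fun z i =>
    calc α * jac F z i i ≤ α * d := mul_le_mul_of_nonneg_left (hdiag z i) hα0.le
      _ ≤ 1 := (le_div_iff₀ hd).1 hαd
  have hFd : Differentiable ℝ F := hF.differentiable one_ne_zero
  have hG : ∀ z, HasFDerivAt (fun z => z - α • F z)
      (ContinuousLinearMap.id ℝ _ - α • fderiv ℝ F z) z := fun z =>
    (hasFDerivAt_id z).sub ((hFd z).hasFDerivAt.const_smul α)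
  refine wNorm_sub_le_of_wNorm_fderiv_le hη (fun z => (hG z).differentiableAt)
    (fun z u => ?_) x y
  rw [(hG z).fderiv]
  simpa [fderiv_apply_eq_jac_mulVec] using
    wNorm_sub_smul_mulVec_le hη (hmono z) hα0.le (hαdiag z) u

/-- Lipschitz constant of Id - αF for monotone F with diagonal bound d. -/
theorem stmt_2 {n : ℕ} (η : Fin n → ℝ) (hη : ∀ i, 0 < η i)
    (F : (Fin n → ℝ) → (Fin n → ℝ)) (hF : ContDiff ℝ 1 F)
    (c : ℝ) (hc : 0 ≤ c) (hmono : ∀ x, logNorm η (-(jac F x)) ≤ -c)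
    (d : ℝ) (hd : 0 < d) (hdiag : ∀ x i, jac F x i i ≤ d)
    (α : ℝ) (hα : α ∈ Set.Ioc (0 : ℝ) (1 / d)) :
    ∀ x y : Fin n → ℝ,
      wNorm η ((x - α • F x) - (y - α • F y)) ≤ (1 - α * c) * wNorm η (x - y) :=
  stmt_2_general η hη F hF c hmono d hd hdiag α hα
end

section
/- (Averagedness of the resolvent.) Let η ∈ ℝⁿ be a positive vector and let F : ℝⁿ → ℝⁿ be continuously differentiable, Lipschitz with respect to ‖·‖_{∞,η⁻¹}, and satisfy μ_{∞,η⁻¹}(−DF(x)) ≤ 0 for all x ∈ ℝⁿ. Let α > 0 and let J : ℝⁿ → ℝⁿ be the resolvent, i.e., J(u) + αF(J(u)) = u for all u ∈ ℝⁿ. Then there exist θ ∈ (0,1) and a map N : ℝⁿ → ℝⁿ that is nonexpansive (1-Lipschitz) with respect to ‖·‖_{∞,η⁻¹} such that J = (1 − θ)·Id + θ·N. -/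
open Filter

/-!
Let `L` be a Lipschitz constant of `F`. Monotonicity says that every `DF(x)` is weighted
diagonally dominant with nonnegative diagonal, and the Lipschitz bound caps the diagonal by `L`;
hence `I - γ DF(x)` has induced `‖·‖_{∞,η⁻¹}` norm at most `1` for `γ = 1/L`, and the forward step
`Id - γ F` is nonexpansive. This alone, in any seminorm, makes the resolvent nonexpansive and gives
`J = (1 - θ) Id + θ N` with `θ = α / (α + γ)` and `N = (Id - γ F) ∘ J`.
-/

section WeightedNorm

variable {n : ℕ} {η : Fin n → ℝ}

lemma wNorm_nonneg (hη : ∀ i, 0 < η i) (x : Fin n → ℝ) : 0 ≤ wNorm η x :=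
  Real.iSup_nonneg fun i => div_nonneg (abs_nonneg _) (hη i).le

lemma abs_le_mul_wNorm (hη : ∀ i, 0 < η i) (x : Fin n → ℝ) (i : Fin n) :
    |x i| ≤ η i * wNorm η x := by
  rw [← div_le_iff₀' (hη i)]
  exact le_ciSup (f := fun i => |x i| / η i) (Set.finite_range _).bddAbove i

lemma wNorm_le_of_abs_le (hη : ∀ i, 0 < η i) {x : Fin n → ℝ} {C : ℝ} (hC : 0 ≤ C)
    (h : ∀ i, |x i| ≤ η i * C) : wNorm η x ≤ C :=
  Real.iSup_le (fun i => (div_le_iff₀' (hη i)).2 (h i)) hC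

noncomputable def wSeminorm (η : Fin n → ℝ) (hη : ∀ i, 0 < η i) : Seminorm ℝ (Fin n → ℝ) :=
  Seminorm.ofSMulLE (wNorm η)
    (le_antisymm (wNorm_le_of_abs_le hη le_rfl fun i => by simp) (wNorm_nonneg hη 0))
    (fun x y => wNorm_le_of_abs_le hη (add_nonneg (wNorm_nonneg hη x) (wNorm_nonneg hη y))
      fun i => by
        rw [mul_add]
        exact (abs_add_le _ _).trans
          (add_le_add (abs_le_mul_wNorm hη x i) (abs_le_mul_wNorm hη y i)))
    (fun r x => wNorm_le_of_abs_le hη (mul_nonneg (norm_nonneg r) (wNorm_nonneg hη x))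
      fun i => by
        rw [Pi.smul_apply, smul_eq_mul, abs_mul, mul_left_comm, Real.norm_eq_abs]
        exact mul_le_mul_of_nonneg_left (abs_le_mul_wNorm hη x i) (abs_nonneg r))

lemma wSeminorm_apply (hη : ∀ i, 0 < η i) (x : Fin n → ℝ) : wSeminorm η hη x = wNorm η x :=
  rfl

end WeightedNorm

section Jacobian

open Matrix

variable {n : ℕ} {η : Fin n → ℝ}

lemma fderiv_eq_jac_mulVec (F : (Fin n → ℝ) → (Fin n → ℝ)) (z v : Fin n → ℝ) :
    fderiv ℝ F z v = jac F z *ᵥ v := by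
  rw [show jac F z = LinearMap.toMatrix' (fderiv ℝ F z : (Fin n → ℝ) →ₗ[ℝ] (Fin n → ℝ)) from rfl,
    LinearMap.toMatrix'_mulVec]
  rfl

lemma abs_mulVec_le (hη : ∀ i, 0 < η i) (A : Matrix (Fin n) (Fin n) ℝ) (v : Fin n → ℝ)
    (i : Fin n) : |(A *ᵥ v) i| ≤ η i * wNorm η v * ∑ j, η j / η i * |A i j| := by
  rw [Matrix.mulVec, dotProduct, Finset.mul_sum]
  refine (Finset.abs_sum_le_sum_abs _ _).trans (Finset.sum_le_sum fun j _ => ?_)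
  calc |A i j * v j| ≤ |A i j| * (η j * wNorm η v) := by
        rw [abs_mul]; exact mul_le_mul_of_nonneg_left (abs_le_mul_wNorm hη v j) (abs_nonneg _)
    _ = η i * wNorm η v * (η j / η i * |A i j|) := by field_simp [(hη i).ne']

/-- The largest weighted row sum `∑ j, η j / η i * |A i j|` is the operator norm of `A` induced
by `wNorm η`, so this is the mean value inequality. -/
lemma wNorm_sub_le_of_jac (hη : ∀ i, 0 < η i) {G : (Fin n → ℝ) → (Fin n → ℝ)}
    (hG : Differentiable ℝ G) {K : ℝ} (hK : 0 ≤ K)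
    (h : ∀ z i, ∑ j, η j / η i * |jac G z i j| ≤ K) (x y : Fin n → ℝ) :
    wNorm η (G x - G y) ≤ K * wNorm η (x - y) := by
  refine wNorm_le_of_abs_le hη (mul_nonneg hK (wNorm_nonneg hη _)) fun i => ?_
  have hderiv : ∀ t : ℝ, HasDerivAt (fun s : ℝ => G (y + s • (x - y)) i)
      ((jac G (y + t • (x - y)) *ᵥ (x - y)) i) t := fun t => by
    have hline : HasDerivAt (fun s : ℝ => y + s • (x - y)) (x - y) t := by
      simpa using ((hasDerivAt_id t).smul_const (x - y)).const_add y
    rw [← fderiv_eq_jac_mulVec]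
    exact hasDerivAt_pi.1 ((hG _).hasFDerivAt.comp_hasDerivAt t hline) i
  have := norm_image_sub_le_of_norm_deriv_le_segment_01' (C := η i * (K * wNorm η (x - y)))
    (fun t _ => (hderiv t).hasDerivWithinAt) fun t _ => by
      calc ‖(jac G (y + t • (x - y)) *ᵥ (x - y)) i‖
          ≤ η i * wNorm η (x - y) * ∑ j, η j / η i * |jac G (y + t • (x - y)) i j| :=
            abs_mulVec_le hη _ _ i
        _ ≤ η i * wNorm η (x - y) * K :=
            mul_le_mul_of_nonneg_left (h _ i) (mul_nonneg (hη i).le (wNorm_nonneg hη _))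
        _ = η i * (K * wNorm η (x - y)) := by ring
  simpa using this

lemma abs_jac_le_of_lipschitz (hη : ∀ i, 0 < η i) {F : (Fin n → ℝ) → (Fin n → ℝ)}
    {z : Fin n → ℝ} (hF : DifferentiableAt ℝ F z) {L : ℝ} (hL0 : 0 ≤ L)
    (hL : ∀ x y, wNorm η (F x - F y) ≤ L * wNorm η (x - y)) (i j : Fin n) :
    |jac F z i j| ≤ L * (η i / η j) := by
  have hline : HasDerivAt (fun s : ℝ => z + s • Pi.single j 1) (Pi.single j 1) 0 := by
    simpa using ((hasDerivAt_id (0 : ℝ)).smul_const (Pi.single j (1 : ℝ))).const_add z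
  have hderiv : HasDerivAt (fun s : ℝ => F (z + s • Pi.single j 1) i) (jac F z i j) 0 := by
    simpa [jac] using hasDerivAt_pi.1
      (hF.hasFDerivAt.comp_hasDerivAt_of_eq (0 : ℝ) hline (by simp)) i
  have hsingle : ∀ s : ℝ, wNorm η (s • Pi.single j 1) ≤ |s| / η j := fun s =>
    wNorm_le_of_abs_le hη (div_nonneg (abs_nonneg s) (hη j).le) fun k => by
      rcases eq_or_ne k j with rfl | hkj
      · simp [mul_div_cancel₀ _ (hη k).ne']
      · simp only [Pi.smul_apply, Pi.single_eq_of_ne hkj, smul_zero, abs_zero]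
        exact mul_nonneg (hη k).le (div_nonneg (abs_nonneg s) (hη j).le)
  refine hderiv.le_of_lip' (mul_nonneg hL0 (div_nonneg (hη i).le (hη j).le))
    (Eventually.of_forall fun s => ?_) |>.trans_eq' (Real.norm_eq_abs _).symm
  calc ‖F (z + s • Pi.single j 1) i - F (z + (0 : ℝ) • Pi.single j 1) i‖
      ≤ η i * wNorm η (F (z + s • Pi.single j 1) - F z) := by
        simpa using abs_le_mul_wNorm hη (F (z + s • Pi.single j 1) - F z) i
    _ ≤ η i * (L * (|s| / η j)) := by
        refine mul_le_mul_of_nonneg_left ((hL _ _).trans ?_) (hη i).le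
        simpa using mul_le_mul_of_nonneg_left (hsingle s) hL0
    _ = L * (η i / η j) * ‖s - 0‖ := by rw [sub_zero, Real.norm_eq_abs]; ring

end Jacobian

section ForwardStep

variable {n : ℕ} {η : Fin n → ℝ}

lemma sum_erase_le_of_logNorm_neg_nonpos {A : Matrix (Fin n) (Fin n) ℝ}
    (h : logNorm η (-A) ≤ 0) (i : Fin n) :
    ∑ j ∈ Finset.univ.erase i, η j / η i * |A i j| ≤ A i i := by
  have hrow := (le_ciSup (f := fun i => (-A) i i + ∑ j ∈ Finset.univ.erase i,
    η j / η i * |(-A) i j|) (Set.finite_range _).bddAbove i).trans h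
  simp only [Matrix.neg_apply, abs_neg] at hrow
  linarith

lemma sum_abs_one_sub_smul_le_one (hη : ∀ i, 0 < η i) {A : Matrix (Fin n) (Fin n) ℝ}
    {i : Fin n} (hdom : ∑ j ∈ Finset.univ.erase i, η j / η i * |A i j| ≤ A i i)
    {γ : ℝ} (hγ : 0 ≤ γ) (hγA : γ * A i i ≤ 1) :
    ∑ j, η j / η i * |(1 - γ • A) i j| ≤ 1 := by
  rw [← Finset.add_sum_erase _ _ (Finset.mem_univ i), div_self (hη i).ne', one_mul]
  have hoff : ∑ j ∈ Finset.univ.erase i, η j / η i * |(1 - γ • A) i j|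
      = γ * ∑ j ∈ Finset.univ.erase i, η j / η i * |A i j| := by
    rw [Finset.mul_sum]
    refine Finset.sum_congr rfl fun j hj => ?_
    rw [Matrix.sub_apply, Matrix.one_apply_ne (Finset.ne_of_mem_erase hj).symm, Matrix.smul_apply,
      smul_eq_mul, zero_sub, abs_neg, abs_mul, abs_of_nonneg hγ]
    ring
  have hdiag : |(1 - γ • A) i i| = 1 - γ * A i i := by
    rw [Matrix.sub_apply, Matrix.one_apply_eq, Matrix.smul_apply, smul_eq_mul,
      abs_of_nonneg (by linarith)]
  rw [hoff, hdiag]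
  nlinarith

lemma jac_sub_smul {F : (Fin n → ℝ) → (Fin n → ℝ)} {z : Fin n → ℝ}
    (hF : DifferentiableAt ℝ F z) (γ : ℝ) :
    jac (fun x => x - γ • F x) z = 1 - γ • jac F z := by
  have hderiv :
      fderiv ℝ (fun x => x - γ • F x) z = ContinuousLinearMap.id ℝ _ - γ • fderiv ℝ F z :=
    ((hasFDerivAt_id z).sub (hF.hasFDerivAt.const_smul γ)).fderiv
  ext i j
  simp [jac, hderiv, Matrix.one_apply, Pi.single_apply]

/-- The Jacobian `1 - γ DF` has weighted row sums `1 - γ (DF_ii - ∑_{j ≠ i} (η_j/η_i) |DF_ij|)`,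
which are at most `1` because `0 ≤ γ DF_ii ≤ γ L ≤ 1`. -/
lemma wNorm_sub_smul_sub_le (hη : ∀ i, 0 < η i) {F : (Fin n → ℝ) → (Fin n → ℝ)}
    (hF : Differentiable ℝ F) {L : ℝ} (hL0 : 0 ≤ L)
    (hL : ∀ x y, wNorm η (F x - F y) ≤ L * wNorm η (x - y))
    (hmono : ∀ x, logNorm η (-(jac F x)) ≤ 0) {γ : ℝ} (hγ : 0 ≤ γ) (hγL : γ * L ≤ 1)
    (x y : Fin n → ℝ) :
    wNorm η ((x - γ • F x) - (y - γ • F y)) ≤ wNorm η (x - y) := by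
  have hdiff : Differentiable ℝ fun x => x - γ • F x := differentiable_id.sub (hF.const_smul γ)
  simpa using wNorm_sub_le_of_jac hη hdiff zero_le_one (fun z i => by
    have hdiag : jac F z i i ≤ L := by
      simpa [div_self (hη i).ne'] using
        le_of_abs_le (abs_jac_le_of_lipschitz hη (hF z) hL0 hL i i)
    rw [jac_sub_smul (hF z)]
    exact sum_abs_one_sub_smul_le_one hη (sum_erase_le_of_logNorm_neg_nonpos (hmono z) i) hγ
      ((mul_le_mul_of_nonneg_left hdiag hγ).trans hγL)) x y

end ForwardStep

namespace Seminorm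

variable {E : Type*} [AddCommGroup E] [Module ℝ E] (p : Seminorm ℝ E) {F J : E → E} {α γ : ℝ}

lemma resolvent_nonexpansive (hγ : 0 < γ) (hα : 0 ≤ α)
    (hfwd : ∀ x y, p ((x - γ • F x) - (y - γ • F y)) ≤ p (x - y))
    (hJ : ∀ u, J u + α • F (J u) = u) (u v : E) : p (J u - J v) ≤ p (u - v) := by
  set x := J u
  set y := J v
  have hsplit : (α + γ) • (x - y)
      = α • ((x - γ • F x) - (y - γ • F y)) + γ • ((x + α • F x) - (y + α • F y)) := by
    module
  have hbound : (α + γ) * p (x - y) ≤ α * p (x - y) + γ * p (u - v) := by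
    calc (α + γ) * p (x - y) = p ((α + γ) • (x - y)) := by
          rw [map_smul_eq_mul, Real.norm_eq_abs, abs_of_pos (by linarith)]
      _ ≤ α * p ((x - γ • F x) - (y - γ • F y)) + γ * p ((x + α • F x) - (y + α • F y)) := by
          rw [hsplit]
          refine (map_add_le_add p _ _).trans_eq ?_
          rw [map_smul_eq_mul, map_smul_eq_mul, Real.norm_eq_abs, Real.norm_eq_abs,
            abs_of_nonneg hα, abs_of_pos hγ]
      _ ≤ α * p (x - y) + γ * p (u - v) := by
          rw [hJ u, hJ v]
          exact add_le_add_left (mul_le_mul_of_nonneg_left (hfwd x y) hα) _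
  nlinarith

theorem exists_averaged_resolvent (hγ : 0 < γ) (hα : 0 < α)
    (hfwd : ∀ x y, p ((x - γ • F x) - (y - γ • F y)) ≤ p (x - y))
    (hJ : ∀ u, J u + α • F (J u) = u) :
    ∃ θ ∈ Set.Ioo (0 : ℝ) 1, ∃ N : E → E,
      (∀ x y, p (N x - N y) ≤ p (x - y)) ∧ ∀ u, J u = (1 - θ) • u + θ • N u := by
  refine ⟨α / (α + γ), ⟨by positivity, (div_lt_one (by positivity)).2 (by linarith)⟩,
    fun u => J u - γ • F (J u), fun x y => (hfwd _ _).trans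
      (p.resolvent_nonexpansive hγ hα.le hfwd hJ x y), fun u => ?_⟩
  dsimp only
  have hu := hJ u
  generalize J u = x at hu ⊢
  subst hu
  match_scalars <;> field_simp <;> ring

end Seminorm

/-- Averagedness of the resolvent of a Lipschitz monotone operator. -/
theorem stmt_6 {n : ℕ} (η : Fin n → ℝ) (hη : ∀ i, 0 < η i)
    (F : (Fin n → ℝ) → (Fin n → ℝ)) (hF : ContDiff ℝ 1 F)
    (L : ℝ) (hL : ∀ x y, wNorm η (F x - F y) ≤ L * wNorm η (x - y))
    (hmono : ∀ x, logNorm η (-(jac F x)) ≤ 0)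
    (α : ℝ) (hα : 0 < α)
    (J : (Fin n → ℝ) → (Fin n → ℝ)) (hJ : ∀ u, J u + α • F (J u) = u) :
    ∃ θ ∈ Set.Ioo (0 : ℝ) 1, ∃ N : (Fin n → ℝ) → (Fin n → ℝ),
      (∀ x y, wNorm η (N x - N y) ≤ wNorm η (x - y)) ∧
      ∀ u, J u = (1 - θ) • u + θ • N u := by
  set K := max L 1
  have hK : 0 < K := one_pos.trans_le (le_max_right L 1)
  have hLK : ∀ x y, wNorm η (F x - F y) ≤ K * wNorm η (x - y) := fun x y =>
    (hL x y).trans (mul_le_mul_of_nonneg_right (le_max_left L 1) (wNorm_nonneg hη _))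
  have hfwd : ∀ x y, wSeminorm η hη ((x - K⁻¹ • F x) - (y - K⁻¹ • F y))
      ≤ wSeminorm η hη (x - y) :=
    wNorm_sub_smul_sub_le hη (hF.differentiable one_ne_zero) hK.le hLK hmono
      (inv_nonneg.2 hK.le) (inv_mul_cancel₀ hK.ne').le
  simpa only [wSeminorm_apply] using
    (wSeminorm η hη).exists_averaged_resolvent (inv_pos.2 hK) hα hfwd hJ
end
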